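/- Let n ≥ 2 be an integer, ε a real number with 0 ≤ ε < 1/2, and p(s) = a·(s - v)^2 + c a real quadratic with a ≥ 0, c ≥ 0 (so p is nonnegative everywhere), satisfying p(0) ≤ ε, p(n-1) ≤ ε, and p(n) ≥ 1-ε. Then ε ≥ 1/2 - n/(n^2+1). -/

import Mathlib

/-! The functional `q ↦ (x-1)² q(x) + 4x q((x-1)/2) - x(x+1) q(x-1) - (x+1) q(0)` vanishes on
quadratics. So if `q ≥ 0` at the midpoint `(x-1)/2`, the values `q(0), q(x-1) ≤ ε` force
`(x-1)² q(x) ≤ (x+1)² ε`, and `q(x) ≥ 1 - ε` then gives `(x-1)² ≤ 2ε(x²+1)`. -/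

theorem quadratic_four_point_identity (a v c x : ℝ) (q : ℝ → ℝ)
    (hq : ∀ s, q s = a * (s - v) ^ 2 + c) :
    (x - 1) ^ 2 * q x + 4 * x * q ((x - 1) / 2) = x * (x + 1) * q (x - 1) + (x + 1) * q 0 := by
  simp only [hq]
  ring

theorem sq_sub_one_le_of_quadratic (a v c x ε : ℝ) (hx : 0 ≤ x) (q : ℝ → ℝ)
    (hq : ∀ s, q s = a * (s - v) ^ 2 + c) (hmid : 0 ≤ q ((x - 1) / 2))
    (h0 : q 0 ≤ ε) (h1 : q (x - 1) ≤ ε) (h2 : 1 - ε ≤ q x) :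
    (x - 1) ^ 2 ≤ 2 * ε * (x ^ 2 + 1) := by
  have key : (x - 1) ^ 2 * (1 - ε) ≤ (x + 1) ^ 2 * ε :=
    calc (x - 1) ^ 2 * (1 - ε) ≤ (x - 1) ^ 2 * q x := by gcongr
      _ ≤ (x - 1) ^ 2 * q x + 4 * x * q ((x - 1) / 2) := by
        have : 0 ≤ 4 * x * q ((x - 1) / 2) := by positivity
        linarith
      _ = x * (x + 1) * q (x - 1) + (x + 1) * q 0 := quadratic_four_point_identity a v c x q hq
      _ ≤ x * (x + 1) * ε + (x + 1) * ε := by gcongr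
      _ = (x + 1) ^ 2 * ε := by ring
  linarith

theorem one_half_sub_div_sq_add_one (x : ℝ) :
    1 / 2 - x / (x ^ 2 + 1) = (x - 1) ^ 2 / (2 * (x ^ 2 + 1)) := by
  field_simp
  ring

theorem stmt_6_general (n : ℤ) (hn : 2 ≤ n) (ε a v c : ℝ)
    (ha : 0 ≤ a) (hc : 0 ≤ c)
    (p : ℝ → ℝ) (hp : ∀ s, p s = a * (s - v)^2 + c)
    (h0 : p 0 ≤ ε) (h1 : p ((n : ℝ) - 1) ≤ ε) (h2 : p (n : ℝ) ≥ 1 - ε) :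
    ε ≥ 1/2 - (n : ℝ)/((n : ℝ)^2+1) := by
  have hn0 : (0 : ℝ) ≤ n := by exact_mod_cast (by omega : (0 : ℤ) ≤ n)
  have hmid : 0 ≤ p (((n : ℝ) - 1) / 2) := by
    rw [hp]
    positivity
  have := sq_sub_one_le_of_quadratic a v c n ε hn0 p hp hmid h0 h1 h2
  rw [ge_iff_le, one_half_sub_div_sq_add_one, div_le_iff₀ (by positivity)]
  linarith

theorem stmt_6 (n : ℤ) (hn : 2 ≤ n) (ε a v c : ℝ) (hε0 : 0 ≤ ε) (hε1 : ε < 1/2)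
    (ha : 0 ≤ a) (hc : 0 ≤ c)
    (p : ℝ → ℝ) (hp : ∀ s, p s = a * (s - v)^2 + c)
    (h0 : p 0 ≤ ε) (h1 : p ((n : ℝ) - 1) ≤ ε) (h2 : p (n : ℝ) ≥ 1 - ε) :
    ε ≥ 1/2 - (n : ℝ)/((n : ℝ)^2+1) :=
  stmt_6_general n hn ε a v c ha hc p hp h0 h1 h2
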